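/- arXiv:2509.08924 — 2 statements merged into one kernel-verified Lean document; each statement's English description precedes it below -/
import Mathlib

section
/- Let Φ : M_D(ℂ) → M_D(ℂ) be a positive trace-preserving linear map, and suppose that for some density matrix Z and constant c ∈ [0,1], we have ‖Φ(ρ) - Z‖₁ ≤ 2c for all density matrices ρ, and moreover |tr(Φ†(I)ρ)/tr(Φ†(I)) − tr(Z'ρ)| ≤ 2c for all density matrices ρ, where Z' is a positive semidefinite matrix with tr(Z') ≤ 1. Then for every density matrix ρ, ‖Φ(ρ)/tr(Φ†(I)) − tr(Z'ρ)·Z‖₁ ≤ 4c, where Φ† is the adjoint of Φ with respect to the Hilbert–Schmidt inner product. -/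
open Matrix
open scoped ComplexOrder

noncomputable def traceNorm {D : ℕ} (X : Matrix (Fin D) (Fin D) ℂ) : ℝ :=
  (((Matrix.posSemidef_conjTranspose_mul_self X).1.eigenvectorUnitary.1 *
    diagonal (((↑) : ℝ → ℂ) ∘ (Real.sqrt ·) ∘ (Matrix.posSemidef_conjTranspose_mul_self X).1.eigenvalues) *
    (star (Matrix.posSemidef_conjTranspose_mul_self X).1.eigenvectorUnitary :
      Matrix (Fin D) (Fin D) ℂ)).trace).re

def IsDensityMatrix {D : ℕ} (ρ : Matrix (Fin D) (Fin D) ℂ) : Prop :=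
  ρ.PosSemidef ∧ ρ.trace = 1

/-!
Put `a = 1 / tr Φ†(I)` and `t = tr(Z'ρ)`. Since `Φ` is trace preserving, `tr Φ†(I) = D` and
`tr(Φ†(I)ρ) = 1`, so the second hypothesis reads `|a - t| ≤ 2c`. Writing
`aΦ(ρ) - tZ = a(Φ(ρ) - Z) + (a - t)Z`, the triangle inequality for the trace norm of Hermitian
matrices gives the bound `a·2c + |a - t| ≤ 4c`. That triangle inequality holds because
`‖C‖₁ = tr(CY)` for the sign `Y` of `C`, while `tr(AY) ≤ ‖A‖₁` whenever `-1 ≤ Y ≤ 1`.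
-/

open scoped MatrixOrder

namespace Matrix

variable {n 𝕜 : Type*} [Fintype n] [DecidableEq n] [RCLike 𝕜]

lemma PosSemidef.trace_mul_nonneg {A B : Matrix n n 𝕜} (hA : A.PosSemidef) (hB : B.PosSemidef) :
    0 ≤ (A * B).trace := by
  set S := CFC.sqrt A
  have hS : S.IsHermitian := (nonneg_iff_posSemidef.mp (CFC.sqrt_nonneg A)).1
  have hSS : S * S = A := CFC.sqrt_mul_sqrt_self A (nonneg_iff_posSemidef.mpr hA)
  calc 0 ≤ (Sᴴ * B * S).trace := (hB.conjTranspose_mul_mul_same S).trace_nonneg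
    _ = (A * B).trace := by rw [hS.eq, trace_mul_cycle, hSS]

lemma IsHermitian.re_trace_mul_le_re_trace_abs {A Y : Matrix n n 𝕜} (hA : A.IsHermitian)
    (hY₁ : -1 ≤ Y) (hY₂ : Y ≤ 1) :
    RCLike.re (A * Y).trace ≤ RCLike.re (CFC.abs A).trace := by
  have hdiff : CFC.abs A - A * Y = A⁺ * (1 - Y) + A⁻ * (1 + Y) :=
    calc CFC.abs A - A * Y = (A⁺ + A⁻) - (A⁺ - A⁻) * Y := by
          rw [CFC.posPart_add_negPart A hA, CFC.posPart_sub_negPart A hA]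
      _ = A⁺ * (1 - Y) + A⁻ * (1 + Y) := by noncomm_ring
  have hnonneg : 0 ≤ (CFC.abs A - A * Y).trace := by
    rw [hdiff, trace_add]
    refine add_nonneg (PosSemidef.trace_mul_nonneg ?_ ?_) (PosSemidef.trace_mul_nonneg ?_ ?_)
    · exact nonneg_iff_posSemidef.mp (CFC.posPart_nonneg A)
    · exact nonneg_iff_posSemidef.mp (sub_nonneg.mpr hY₂)
    · exact nonneg_iff_posSemidef.mp (CFC.negPart_nonneg A)
    · exact nonneg_iff_posSemidef.mp (neg_le_iff_add_nonneg'.mp hY₁)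
  have hre := (RCLike.nonneg_iff.mp hnonneg).1
  rw [trace_sub, map_sub] at hre
  linarith

lemma IsHermitian.exists_mul_eq_abs {A : Matrix n n 𝕜} (hA : A.IsHermitian) :
    ∃ Y, -1 ≤ Y ∧ Y ≤ 1 ∧ A * Y = CFC.abs A := by
  let sign : ℝ → ℝ := fun x => if 0 ≤ x then 1 else -1
  have hcont : ContinuousOn sign (spectrum ℝ A) := A.finite_real_spectrum.continuousOn _
  refine ⟨cfc sign A, ?_, cfc_le_one sign A fun x _ => by dsimp [sign]; split_ifs <;> norm_num, ?_⟩
  · simpa using algebraMap_le_cfc sign (-1) A (fun x _ => by dsimp [sign]; split_ifs <;> norm_num)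
  · rw [CFC.abs_eq_cfc_norm A hA]
    calc A * cfc sign A = cfc (fun x => x * sign x) A := by rw [cfc_mul .., cfc_id' ℝ A]
      _ = cfc (‖·‖) A := by
        refine cfc_congr fun x _ => ?_
        dsimp [sign]; split_ifs with hx
        · rw [abs_of_nonneg hx, mul_one]
        · rw [abs_of_neg (not_le.mp hx), mul_neg_one]

lemma IsHermitian.re_trace_abs_add_le {A B : Matrix n n 𝕜} (hA : A.IsHermitian)
    (hB : B.IsHermitian) :
    RCLike.re (CFC.abs (A + B)).trace ≤
      RCLike.re (CFC.abs A).trace + RCLike.re (CFC.abs B).trace := by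
  obtain ⟨Y, hY₁, hY₂, hY⟩ := (hA.add hB).exists_mul_eq_abs
  calc RCLike.re (CFC.abs (A + B)).trace = RCLike.re (A * Y).trace + RCLike.re (B * Y).trace := by
        rw [← hY, Matrix.add_mul, trace_add, map_add]
    _ ≤ _ := add_le_add (hA.re_trace_mul_le_re_trace_abs hY₁ hY₂)
        (hB.re_trace_mul_le_re_trace_abs hY₁ hY₂)

lemma trace_conjTranspose_mul_adjoint_one {Φ Φd : Matrix n n 𝕜 →ₗ[𝕜] Matrix n n 𝕜}
    (htp : ∀ A, (Φ A).trace = A.trace)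
    (hadj : ∀ A B, ((Φ A)ᴴ * B).trace = (Aᴴ * Φd B).trace) (A : Matrix n n 𝕜) :
    (Aᴴ * Φd 1).trace = star A.trace := by
  rw [← hadj, Matrix.mul_one, trace_conjTranspose, htp]

end Matrix

section traceNorm

variable {D : ℕ}

theorem traceNorm_eq_re_trace_abs (X : Matrix (Fin D) (Fin D) ℂ) :
    traceNorm X = (CFC.abs X).trace.re := by
  have hX : (star X * X).PosSemidef := posSemidef_conjTranspose_mul_self X
  rw [traceNorm, CFC.abs, CFC.sqrt_eq_real_sqrt _ (nonneg_iff_posSemidef.mpr hX), cfcₙ_eq_cfc,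
    hX.1.cfc_eq]
  rfl

theorem traceNorm_smul (z : ℂ) (X : Matrix (Fin D) (Fin D) ℂ) :
    traceNorm (z • X) = ‖z‖ * traceNorm X := by
  rw [traceNorm_eq_re_trace_abs, traceNorm_eq_re_trace_abs, CFC.abs_smul, trace_smul,
    Complex.real_smul, Complex.re_ofReal_mul]

theorem traceNorm_of_posSemidef {Z : Matrix (Fin D) (Fin D) ℂ} (hZ : Z.PosSemidef) :
    traceNorm Z = Z.trace.re := by
  rw [traceNorm_eq_re_trace_abs, CFC.abs_of_nonneg Z (nonneg_iff_posSemidef.mpr hZ)]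

theorem traceNorm_add_le_of_isHermitian {A B : Matrix (Fin D) (Fin D) ℂ} (hA : A.IsHermitian)
    (hB : B.IsHermitian) : traceNorm (A + B) ≤ traceNorm A + traceNorm B := by
  simp only [traceNorm_eq_re_trace_abs]
  exact hA.re_trace_abs_add_le hB

end traceNorm

theorem stmt_6_general {D : ℕ}
    (Φ Φd : Matrix (Fin D) (Fin D) ℂ →ₗ[ℂ] Matrix (Fin D) (Fin D) ℂ)
    (hpos : ∀ A : Matrix (Fin D) (Fin D) ℂ, A.PosSemidef → (Φ A).PosSemidef)
    (htp : ∀ A : Matrix (Fin D) (Fin D) ℂ, (Φ A).trace = A.trace)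
    -- Φd is the Hilbert–Schmidt adjoint of Φ
    (hadj : ∀ A B : Matrix (Fin D) (Fin D) ℂ, ((Φ A)ᴴ * B).trace = (Aᴴ * Φd B).trace)
    (Z Z' : Matrix (Fin D) (Fin D) ℂ) (hZ : IsDensityMatrix Z)
    (c : ℝ) (hc0 : 0 ≤ c)
    (h1 : ∀ ρ : Matrix (Fin D) (Fin D) ℂ, IsDensityMatrix ρ →
      traceNorm (Φ ρ - Z) ≤ 2 * c)
    (h2 : ∀ ρ : Matrix (Fin D) (Fin D) ℂ, IsDensityMatrix ρ →
      |((Φd 1 * ρ).trace).re / ((Φd 1).trace).re - ((Z' * ρ).trace).re| ≤ 2 * c) :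
    ∀ ρ : Matrix (Fin D) (Fin D) ℂ, IsDensityMatrix ρ →
      traceNorm ((((((Φd 1).trace).re)⁻¹ : ℝ) : ℂ) • Φ ρ
        - ((((Z' * ρ).trace).re : ℝ) : ℂ) • Z) ≤ 4 * c := by
  intro ρ hρ
  have hD : 1 ≤ (D : ℝ) := by
    cases D with
    | zero => simpa using hρ.2
    | succ D => simp
  have htr : (Φd 1).trace = D := by
    simpa using trace_conjTranspose_mul_adjoint_one htp hadj 1
  have htrρ : (Φd 1 * ρ).trace = 1 := by
    rw [trace_mul_comm, ← hρ.1.1.eq, trace_conjTranspose_mul_adjoint_one htp hadj, hρ.2, star_one]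
  set a : ℝ := ((Φd 1).trace.re)⁻¹ with ha
  set t : ℝ := (Z' * ρ).trace.re
  rw [htr, Complex.natCast_re] at ha
  have ha₀ : 0 ≤ a := by rw [ha]; positivity
  have ha₁ : a ≤ 1 := by rw [ha]; exact inv_le_one_of_one_le₀ hD
  have hat : |a - t| ≤ 2 * c := by simpa [htrρ, htr, ha] using h2 ρ hρ
  have hsplit : (a : ℂ) • Φ ρ - (t : ℂ) • Z = (a : ℂ) • (Φ ρ - Z) + ((a - t : ℝ) : ℂ) • Z := by
    push_cast; module
  have hherm : (Φ ρ - Z).IsHermitian := (hpos ρ hρ.1).1.sub hZ.1.1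
  calc traceNorm ((a : ℂ) • Φ ρ - (t : ℂ) • Z)
      ≤ traceNorm ((a : ℂ) • (Φ ρ - Z)) + traceNorm (((a - t : ℝ) : ℂ) • Z) := by
        rw [hsplit]
        exact traceNorm_add_le_of_isHermitian (hherm.smul (Complex.conj_ofReal a))
          (hZ.1.1.smul (Complex.conj_ofReal _))
    _ = a * traceNorm (Φ ρ - Z) + |a - t| := by
        rw [traceNorm_smul, traceNorm_smul, traceNorm_of_posSemidef hZ.1, hZ.2, Complex.norm_real,
          Complex.norm_real, Real.norm_of_nonneg ha₀, Real.norm_eq_abs, Complex.one_re, mul_one]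
    _ ≤ 4 * c := by
        linarith [mul_le_mul_of_nonneg_left (h1 ρ hρ) ha₀, mul_le_mul_of_nonneg_right ha₁ hc0]

theorem stmt_6 {D : ℕ}
    (Φ Φd : Matrix (Fin D) (Fin D) ℂ →ₗ[ℂ] Matrix (Fin D) (Fin D) ℂ)
    (hpos : ∀ A : Matrix (Fin D) (Fin D) ℂ, A.PosSemidef → (Φ A).PosSemidef)
    (htp : ∀ A : Matrix (Fin D) (Fin D) ℂ, (Φ A).trace = A.trace)
    -- Φd is the Hilbert–Schmidt adjoint of Φ
    (hadj : ∀ A B : Matrix (Fin D) (Fin D) ℂ, ((Φ A)ᴴ * B).trace = (Aᴴ * Φd B).trace)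
    (Z Z' : Matrix (Fin D) (Fin D) ℂ) (hZ : IsDensityMatrix Z)
    (hZ' : Z'.PosSemidef) (hZ'tr : (Z'.trace).re ≤ 1)
    (c : ℝ) (hc0 : 0 ≤ c) (hc1 : c ≤ 1)
    (h1 : ∀ ρ : Matrix (Fin D) (Fin D) ℂ, IsDensityMatrix ρ →
      traceNorm (Φ ρ - Z) ≤ 2 * c)
    (h2 : ∀ ρ : Matrix (Fin D) (Fin D) ℂ, IsDensityMatrix ρ →
      |((Φd 1 * ρ).trace).re / ((Φd 1).trace).re - ((Z' * ρ).trace).re| ≤ 2 * c) :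
    ∀ ρ : Matrix (Fin D) (Fin D) ℂ, IsDensityMatrix ρ →
      traceNorm ((((((Φd 1).trace).re)⁻¹ : ℝ) : ℂ) • Φ ρ
        - ((((Z' * ρ).trace).re : ℝ) : ℂ) • Z) ≤ 4 * c :=
  stmt_6_general Φ Φd hpos htp hadj Z Z' hZ c hc0 h1 h2
end

section
/- Let Φ : M_D(ℂ) → M_D(ℂ) be a strictly positive (i.e., mapping nonzero positive semidefinite matrices to positive definite matrices) linear map. Then Φ has a right eigenmatrix R which is a positive definite density matrix, with eigenvalue equal to the spectral radius λ of Φ: Φ(R) = λR, and λ > 0. -/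
/-!
Work in a finite-dimensional C⋆-algebra `A` (for the theorem, `M_D(ℂ)` with the operator norm and
the Loewner order). The pairs `(t, a)` with `0 ≤ a`, `‖a‖ = 1` and `t • a ≤ Φ a` form a compact
set; take one with `t` maximal. If `Φ a - t • a` were nonzero, strict positivity would make
`Φ (Φ a) - t • Φ a` dominate a positive multiple of `Φ a`, and the normalisation of `Φ a` would
beat `t`; so `Φ a = t • a`, and `a` is strictly positive. Every self-adjoint `x` then lies in some
interval `[-c • a, c • a]`, which `Φⁿ` maps into `[-c tⁿ • a, c tⁿ • a]`; hence `‖Φⁿ x‖ = O(tⁿ)`,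
which bounds the modulus of every eigenvalue by `t`.
-/

open scoped ComplexStarModule

section PositiveMap

variable {A : Type*} [CStarAlgebra A] [PartialOrder A] [StarOrderedRing A]

lemma IsStrictlyPositive.exists_mem_Icc_neg_smul_smul [Nontrivial A] {r a : A}
    (hr : IsStrictlyPositive r) (ha : IsSelfAdjoint a) :
    ∃ c : ℝ, 0 < c ∧ a ∈ Set.Icc (-(c • r)) (c • r) := by
  obtain ⟨s, hs, hsr⟩ := (CFC.exists_pos_algebraMap_le_iff hr.isSelfAdjoint).mpr
    fun x hx => hr.spectrum_pos hx
  have hbound : algebraMap ℝ A ‖a‖ ≤ ((‖a‖ + 1) / s) • r :=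
    calc algebraMap ℝ A ‖a‖ ≤ algebraMap ℝ A (‖a‖ + 1) := algebraMap_mono A (by linarith)
      _ = ((‖a‖ + 1) / s) • algebraMap ℝ A s := by
        rw [Algebra.algebraMap_eq_smul_one, Algebra.algebraMap_eq_smul_one, smul_smul,
          div_mul_cancel₀ _ hs.ne']
      _ ≤ ((‖a‖ + 1) / s) • r := smul_le_smul_of_nonneg_left hsr (by positivity)
  exact ⟨(‖a‖ + 1) / s, by positivity, (neg_le_neg hbound).trans ha.neg_algebraMap_norm_le_self,
    ha.le_algebraMap_norm_self.trans hbound⟩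

lemma norm_le_two_mul_norm_of_mem_Icc {a s : A} (ha : a ∈ Set.Icc (-s) s) :
    ‖a‖ ≤ 2 * ‖s‖ := by
  obtain ⟨h₁, h₂⟩ := ha
  have hplus : ‖s + a‖ ≤ ‖(2 : ℝ) • s‖ :=
    CStarAlgebra.norm_le_norm_of_nonneg_of_le (neg_le_iff_add_nonneg'.mp h₁)
      (by rw [two_smul]; exact add_le_add_right h₂ s)
  have hminus : ‖s - a‖ ≤ ‖(2 : ℝ) • s‖ :=
    CStarAlgebra.norm_le_norm_of_nonneg_of_le (sub_nonneg.mpr h₂)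
      (by rw [two_smul, sub_eq_add_neg]; exact add_le_add_right (neg_le.mp h₁) s)
  have htwo : (2 : ℝ) • a = (s + a) - (s - a) := by module
  have htri := norm_sub_le (s + a) (s - a)
  rw [← htwo, norm_smul, Real.norm_two] at htri
  rw [norm_smul, Real.norm_two] at hplus hminus
  linarith

lemma le_of_forall_pow_mul_le {a b d C : ℝ} (hb : 0 < b) (hd : 0 < d)
    (h : ∀ n : ℕ, a ^ n * d ≤ C * b ^ n) : a ≤ b := by
  by_contra! hab
  obtain ⟨n, hn⟩ := pow_unbounded_of_one_lt (C / d) ((one_lt_div hb).mpr hab)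
  rw [div_pow, div_lt_div_iff₀ hd (pow_pos hb n)] at hn
  linarith [h n]

namespace LinearMap

variable (Φ : A →ₗ[ℂ] A)

lemma map_le_map_of_map_nonneg (hΦ : ∀ a, 0 ≤ a → 0 ≤ Φ a) {a b : A} (hab : a ≤ b) :
    Φ a ≤ Φ b := by
  simpa using hΦ (b - a) (sub_nonneg.mpr hab)

lemma pow_apply_mem_Icc_of_map_nonneg (hΦ : ∀ a, 0 ≤ a → 0 ≤ Φ a) {r : A} {ρ : ℝ}
    (hΦr : Φ r = ρ • r) {a : A} {c : ℝ} (ha : a ∈ Set.Icc (-(c • r)) (c • r)) (n : ℕ) :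
    (Φ ^ n) a ∈ Set.Icc (-((c * ρ ^ n) • r)) ((c * ρ ^ n) • r) := by
  induction n with
  | zero => simpa using ha
  | succ n ih =>
    have hstep : Φ ((c * ρ ^ n) • r) = (c * ρ ^ (n + 1)) • r := by
      rw [map_smul_of_tower, hΦr, smul_smul, pow_succ, mul_assoc]
    rw [pow_succ' Φ n, Module.End.mul_apply, ← hstep, ← map_neg]
    exact ⟨Φ.map_le_map_of_map_nonneg hΦ ih.1, Φ.map_le_map_of_map_nonneg hΦ ih.2⟩

lemma exists_norm_pow_apply_le [Nontrivial A] (hΦ : ∀ a, 0 ≤ a → 0 ≤ Φ a) {r : A} {ρ : ℝ}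
    (hr : IsStrictlyPositive r) (hρ : 0 ≤ ρ) (hΦr : Φ r = ρ • r) (a : A) :
    ∃ C : ℝ, ∀ n : ℕ, ‖(Φ ^ n) a‖ ≤ C * ρ ^ n := by
  have hsa : ∀ b : A, IsSelfAdjoint b → ∃ C : ℝ, ∀ n : ℕ, ‖(Φ ^ n) b‖ ≤ C * ρ ^ n := by
    intro b hb
    obtain ⟨c, hc, hcb⟩ := hr.exists_mem_Icc_neg_smul_smul hb
    refine ⟨2 * c * ‖r‖, fun n => ?_⟩
    calc ‖(Φ ^ n) b‖ ≤ 2 * ‖(c * ρ ^ n) • r‖ :=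
          norm_le_two_mul_norm_of_mem_Icc (Φ.pow_apply_mem_Icc_of_map_nonneg hΦ hΦr hcb n)
      _ = 2 * c * ‖r‖ * ρ ^ n := by
        rw [norm_smul, Real.norm_of_nonneg (by positivity)]; ring
  obtain ⟨C₁, hC₁⟩ := hsa _ (ℜ a).2
  obtain ⟨C₂, hC₂⟩ := hsa _ (ℑ a).2
  refine ⟨C₁ + C₂, fun n => ?_⟩
  calc ‖(Φ ^ n) a‖ = ‖(Φ ^ n) (ℜ a) + Complex.I • (Φ ^ n) (ℑ a)‖ := by
        rw [← map_smul, ← map_add, realPart_add_I_smul_imaginaryPart]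
    _ ≤ ‖(Φ ^ n) (ℜ a)‖ + ‖(Φ ^ n) (ℑ a)‖ := by
        refine (norm_add_le _ _).trans ?_
        rw [norm_smul, Complex.norm_I, one_mul]
    _ ≤ (C₁ + C₂) * ρ ^ n := by linarith [hC₁ n, hC₂ n]

lemma norm_le_of_hasEigenvalue [Nontrivial A] (hΦ : ∀ a, 0 ≤ a → 0 ≤ Φ a) {r : A} {ρ : ℝ}
    (hr : IsStrictlyPositive r) (hρ : 0 < ρ) (hΦr : Φ r = ρ • r) {z : ℂ}
    (hz : Module.End.HasEigenvalue Φ z) : ‖z‖ ≤ ρ := by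
  obtain ⟨x, hx⟩ := hz.exists_hasEigenvector
  obtain ⟨C, hC⟩ := Φ.exists_norm_pow_apply_le hΦ hr hρ.le hΦr x
  refine le_of_forall_pow_mul_le (C := C) hρ (norm_pos_iff.mpr hx.2) fun n => ?_
  simpa [hx.pow_apply, norm_smul, norm_pow] using hC n

def collatzWielandtSet : Set (ℝ × A) :=
  {p | 0 ≤ p.1 ∧ 0 ≤ p.2 ∧ ‖p.2‖ = 1 ∧ p.1 • p.2 ≤ Φ p.2}

lemma isCompact_collatzWielandtSet [FiniteDimensional ℂ A] : IsCompact Φ.collatzWielandtSet := by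
  have hΦc : Continuous Φ := Φ.continuous_of_finiteDimensional
  have hclosed : IsClosed Φ.collatzWielandtSet := by
    simp only [collatzWielandtSet, Set.ofPred_and]
    exact (isClosed_le continuous_const continuous_fst).inter
      ((isClosed_le continuous_const continuous_snd).inter
      ((isClosed_eq continuous_snd.norm continuous_const).inter
      (isClosed_le (continuous_fst.smul continuous_snd) (hΦc.comp continuous_snd))))
  refine ((isCompact_Icc (a := 0) (b := ‖Φ.toContinuousLinearMap‖)).prod
    (isCompact_sphere (0 : A) 1)).of_isClosed_subset hclosed ?_
  rintro ⟨t, a⟩ ⟨ht, ha, hnorm, hle⟩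
  refine ⟨⟨ht, ?_⟩, mem_sphere_zero_iff_norm.mpr hnorm⟩
  calc t = ‖t • a‖ := by rw [norm_smul, hnorm, Real.norm_of_nonneg ht, mul_one]
    _ ≤ ‖Φ a‖ := CStarAlgebra.norm_le_norm_of_nonneg_of_le (smul_nonneg ht ha) hle
    _ ≤ ‖Φ.toContinuousLinearMap‖ := by
      simpa [hnorm] using Φ.toContinuousLinearMap.le_opNorm a

lemma exists_isMaxOn_collatzWielandtSet [FiniteDimensional ℂ A] [Nontrivial A]
    (hΦ : ∀ a, 0 ≤ a → 0 ≤ Φ a) :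
    ∃ p ∈ Φ.collatzWielandtSet, IsMaxOn Prod.fst Φ.collatzWielandtSet p :=
  Φ.isCompact_collatzWielandtSet.exists_isMaxOn
    ⟨(0, 1), le_rfl, zero_le_one, CStarRing.norm_one, by simpa using hΦ 1 zero_le_one⟩
    continuous_fst.continuousOn

lemma apply_eq_smul_of_isMaxOn_collatzWielandtSet [Nontrivial A]
    (hΦ : ∀ a, 0 ≤ a → a ≠ 0 → IsStrictlyPositive (Φ a)) {t : ℝ} {a : A}
    (hmem : (t, a) ∈ Φ.collatzWielandtSet)
    (hmax : IsMaxOn Prod.fst Φ.collatzWielandtSet (t, a)) :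
    Φ a = t • a := by
  obtain ⟨ht, ha, hnorm, hle⟩ := hmem
  by_contra hne
  have ha0 : a ≠ 0 := by rintro rfl; simp at hnorm
  have hΦa := hΦ a ha ha0
  have hΦq := hΦ (Φ a - t • a) (sub_nonneg.mpr hle) (sub_ne_zero.mpr hne)
  obtain ⟨c, hc, -, hcle⟩ := hΦq.exists_mem_Icc_neg_smul_smul hΦa.isSelfAdjoint
  have hgain : (t + c⁻¹) • Φ a ≤ Φ (Φ a) := by
    have := smul_le_smul_of_nonneg_left hcle (inv_nonneg.mpr hc.le)
    rw [smul_smul, inv_mul_cancel₀ hc.ne', one_smul, map_sub, map_smul_of_tower] at this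
    rw [add_smul]
    exact le_sub_iff_add_le'.mp this
  have hΦa0 : ‖Φ a‖ ≠ 0 := norm_ne_zero_iff.mpr hΦa.isUnit.ne_zero
  have hmem' : (t + c⁻¹, ‖Φ a‖⁻¹ • Φ a) ∈ Φ.collatzWielandtSet := by
    refine ⟨by positivity, smul_nonneg (by positivity) hΦa.nonneg, ?_, ?_⟩
    · rw [norm_smul, norm_inv, norm_norm, inv_mul_cancel₀ hΦa0]
    · rw [map_smul_of_tower, smul_comm]
      exact smul_le_smul_of_nonneg_left hgain (by positivity)
  have hgt : t + c⁻¹ ≤ t := hmax hmem'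
  linarith [inv_pos.mpr hc]

theorem exists_isStrictlyPositive_eigenvector [FiniteDimensional ℂ A] [Nontrivial A]
    (hΦ : ∀ a, 0 ≤ a → a ≠ 0 → IsStrictlyPositive (Φ a)) :
    ∃ (r : A) (ρ : ℝ), 0 < ρ ∧ IsStrictlyPositive r ∧ Φ r = ρ • r ∧
      (ρ : ℂ) ∈ spectrum ℂ Φ ∧ ∀ z ∈ spectrum ℂ Φ, ‖z‖ ≤ ρ := by
  have hΦ₀ : ∀ a, 0 ≤ a → 0 ≤ Φ a := fun a ha => by
    rcases eq_or_ne a 0 with rfl | ha0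
    · simp
    · exact (hΦ a ha ha0).nonneg
  obtain ⟨⟨ρ, r⟩, hmem, hmax⟩ := Φ.exists_isMaxOn_collatzWielandtSet hΦ₀
  have hΦr := Φ.apply_eq_smul_of_isMaxOn_collatzWielandtSet hΦ hmem hmax
  have hr0 : r ≠ 0 := by rintro rfl; simpa using hmem.2.2.1
  have hΦr_pos := hΦ r hmem.2.1 hr0
  have hρ : 0 < ρ := by
    refine hmem.1.lt_of_ne' fun hρ0 => hΦr_pos.isUnit.ne_zero ?_
    rw [hΦr, show ρ = 0 from hρ0, zero_smul]
  have hr : IsStrictlyPositive r := by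
    simpa [hΦr, smul_smul, inv_mul_cancel₀ hρ.ne'] using hΦr_pos.smul (inv_pos.mpr hρ)
  refine ⟨r, ρ, hρ, hr, hΦr, ?_, fun z hz => ?_⟩
  · refine Module.End.HasEigenvalue.mem_spectrum
      (Module.End.hasEigenvalue_of_hasEigenvector ⟨?_, hr0⟩)
    rwa [Module.End.mem_eigenspace_iff, Complex.coe_smul]
  · exact Φ.norm_le_of_hasEigenvalue hΦ₀ hr hρ hΦr (Module.End.HasEigenvalue.of_mem_spectrum hz)

end LinearMap

end PositiveMap

open Matrix
open scoped ComplexOrder MatrixOrder Matrix.Norms.L2Operator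

theorem stmt_10 {D : ℕ} (hD : 0 < D)
    (Φ : Matrix (Fin D) (Fin D) ℂ →ₗ[ℂ] Matrix (Fin D) (Fin D) ℂ)
    (hstrict : ∀ P : Matrix (Fin D) (Fin D) ℂ, P.PosSemidef → P ≠ 0 → (Φ P).PosDef) :
    ∃ (R : Matrix (Fin D) (Fin D) ℂ) (lam : ℝ),
      0 < lam ∧ R.PosDef ∧ R.trace = 1 ∧ Φ R = (lam : ℂ) • R ∧
      -- lam is the spectral radius of Φ
      (lam : ℂ) ∈ spectrum ℂ (Φ : Module.End ℂ (Matrix (Fin D) (Fin D) ℂ)) ∧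
      ∀ z ∈ spectrum ℂ (Φ : Module.End ℂ (Matrix (Fin D) (Fin D) ℂ)), ‖z‖ ≤ lam := by
  have : Nonempty (Fin D) := ⟨⟨0, hD⟩⟩
  obtain ⟨r, ρ, hρ, hr, hΦr, hρ_mem, hρ_max⟩ :=
    Φ.exists_isStrictlyPositive_eigenvector fun P hP hP0 =>
      (hstrict P (nonneg_iff_posSemidef.mp hP) hP0).isStrictlyPositive
  obtain ⟨τ, hτ, hτr⟩ := RCLike.pos_iff_exists_ofReal.mp hr.posDef.trace_pos
  refine ⟨τ⁻¹ • r, ρ, hρ, (hr.smul (inv_pos.mpr hτ)).posDef, ?_, ?_, hρ_mem, hρ_max⟩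
  · rw [trace_smul, ← hτr, ← Complex.coe_smul, smul_eq_mul, Complex.ofReal_inv]
    exact inv_mul_cancel₀ (by simpa using hτ.ne')
  · rw [LinearMap.map_smul_of_tower, hΦr, smul_comm, Complex.coe_smul]
end
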